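/- arXiv:2603.11773 — 2 statements merged into one kernel-verified Lean document; each statement's English description precedes it below -/
import Mathlib

section
/- Let k ≥ 1 and m ≥ 1 be integers and let n ≥ (2k+1)·m³. Then every proper edge coloring of any balanced blowup C_{2k+1}⟨n⟩ of the odd cycle C_{2k+1} on n vertices contains a rainbow copy of the balanced blowup C_{2k+1}⟨m⟩ on m vertices. -/
open Filter SimpleGraph

/-- `G` contains a copy of `F` as a (not necessarily induced) subgraph. -/
def Contains {α β : Type} (F : SimpleGraph α) (G : SimpleGraph β) : Prop :=
  ∃ f : F →g G, Function.Injective f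

/-- A proper edge coloring: edges sharing a vertex receive distinct colors. -/
def IsProperEdgeColoring {β : Type} (G : SimpleGraph β) (c : Sym2 β → ℕ) : Prop :=
  ∀ e₁ ∈ G.edgeSet, ∀ e₂ ∈ G.edgeSet, e₁ ≠ e₂ → (∃ v, v ∈ e₁ ∧ v ∈ e₂) → c e₁ ≠ c e₂

/-- There is a rainbow copy of `F` in `G` with respect to the edge coloring `c`:
a copy of `F` all of whose edges receive pairwise distinct colors. -/
def HasRainbowCopy {α β : Type} (F : SimpleGraph α) (G : SimpleGraph β)
    (c : Sym2 β → ℕ) : Prop :=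
  ∃ f : F →g G, Function.Injective f ∧
    ∀ e₁ ∈ F.edgeSet, ∀ e₂ ∈ F.edgeSet,
      c (Sym2.map f e₁) = c (Sym2.map f e₂) → e₁ = e₂

/-- The blowup of `G` with part sizes `t`. -/
def blowup {α : Type} (G : SimpleGraph α) (t : α → ℕ) :
    SimpleGraph (Σ v : α, Fin (t v)) where
  Adj x y := G.Adj x.1 y.1
  symm := ⟨fun _ _ h => G.adj_symm h⟩
  loopless := ⟨fun x h => G.irrefl (v := x.1) h⟩

/-- `t` describes a balanced blowup on `n` vertices: all parts are nonempty,
any two part sizes differ by at most one, and the total number of vertices is `n`. -/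
def IsBalanced {α : Type} [Fintype α] (t : α → ℕ) (n : ℕ) : Prop :=
  (∀ v, 0 < t v) ∧ (∀ u v, t u ≤ t v + 1) ∧ ∑ v, t v = n

/-- The number of subgraphs of `G` isomorphic to `H`. -/
noncomputable def copyCount {α β : Type} (H : SimpleGraph α) (G : SimpleGraph β) : ℕ :=
  Set.ncard {H' : G.Subgraph | Nonempty (H ≃g H'.coe)}

/-- The set of sizes of the smaller color class over all proper 2-colorings of the
vertices of `F`; its least element is `p(F)`. -/
def smallerClassSizes {α : Type} [Fintype α] (F : SimpleGraph α) : Set ℕ :=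
  {t | ∃ χ : α → Bool, (∀ u v, F.Adj u v → χ u ≠ χ v) ∧
    t = min (Finset.univ.filter fun x => χ x = true).card
            (Finset.univ.filter fun x => χ x = false).card}

/-- The set of `j` such that `F` is a subgraph of some blowup of `C_{2j-1}`;
its greatest element is `γ(F)`. -/
def gammaSet {α : Type} (F : SimpleGraph α) : Set ℕ :=
  {j | ∃ t : Fin (2 * j - 1) → ℕ, (∀ v, 0 < t v) ∧
    Contains F (blowup (cycleGraph (2 * j - 1)) t)}

/-! Embed the vertices of the small blowup greedily, each into the part of the large blowup
that it is supposed to occupy. When the vertices of `s` are already placed, a candidate `w` for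
the next vertex is ruled out only if it is already used, or if a new edge `w (g b)` repeats the
colour of an old edge `(g a') (g b')`; since the colouring is proper, each of the `#s³` triples
`(b, a', b')` rules out at most one `w`. Balancedness makes every part of size at least
`max 1 (m³ - 1)`, which exceeds `#s + #s³` whenever `#s < m`, so a candidate always survives. -/

open Finset

section RainbowEmbedding

variable {α β : Type} {F : SimpleGraph α} {G : SimpleGraph β} {c : Sym2 β → ℕ}

lemma IsProperEdgeColoring.eq_of_color_eq (hc : IsProperEdgeColoring G c) {u v w : β}
    (hu : G.Adj u v) (hw : G.Adj w v) (h : c s(u, v) = c s(w, v)) : u = w := by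
  by_contra hne
  exact hc _ hu _ hw (mt Sym2.congr_left.mp hne) ⟨v, by simp, by simp⟩ h

lemma IsProperEdgeColoring.card_filter_color_eq_le_one (hc : IsProperEdgeColoring G c)
    {S : Finset β} {v : β} (hS : ∀ u ∈ S, G.Adj u v) (k : ℕ) :
    #{u ∈ S | c s(u, v) = k} ≤ 1 := by
  rw [Finset.card_le_one]
  intro u hu w hw
  rw [Finset.mem_filter] at hu hw
  exact hc.eq_of_color_eq (hS u hu.1) (hS w hw.1) (hu.2.trans hw.2.symm)

def IsRainbowOn (F : SimpleGraph α) (c : Sym2 β → ℕ) (g : α → β) (s : Set α) : Prop :=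
  Set.InjOn g s ∧ Set.InjOn (fun e => c (e.map g)) (F.edgeSet ∩ s.sym2)

lemma edgeSet_inter_sym2_insert (F : SimpleGraph α) (x : α) (s : Set α) :
    F.edgeSet ∩ (insert x s).sym2 =
      (fun b => s(x, b)) '' {b ∈ s | F.Adj x b} ∪ F.edgeSet ∩ s.sym2 := by
  ext e
  induction e using Sym2.ind with
  | h u v =>
    simp only [Set.mem_inter_iff, mem_edgeSet, Set.mk_mem_sym2_iff, Set.mem_insert_iff,
      Set.mem_union, Set.mem_image, Set.mem_ofPred_eq, Sym2.eq_iff]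
    constructor
    · rintro ⟨huv, rfl | hu, rfl | hv⟩
      · exact (F.irrefl huv).elim
      · exact Or.inl ⟨v, ⟨hv, huv⟩, Or.inl ⟨rfl, rfl⟩⟩
      · exact Or.inl ⟨u, ⟨hu, huv.symm⟩, Or.inr ⟨rfl, rfl⟩⟩
      · exact Or.inr ⟨huv, hu, hv⟩
    · rintro (⟨b, ⟨hb, hxb⟩, ⟨rfl, rfl⟩ | ⟨rfl, rfl⟩⟩ | ⟨huv, hu, hv⟩)
      · exact ⟨hxb, Or.inl rfl, Or.inr hb⟩
      · exact ⟨hxb.symm, Or.inr hb, Or.inl rfl⟩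
      · exact ⟨huv, Or.inr hu, Or.inr hv⟩

lemma IsRainbowOn.update [DecidableEq α] (hc : IsProperEdgeColoring G c) {g : α → β}
    {s : Set α} (hg : IsRainbowOn F c g s) {x : α} (hx : x ∉ s) {w : β} (hw_new : w ∉ g '' s)
    (hw_adj : ∀ b ∈ s, F.Adj x b → G.Adj w (g b))
    (hw_fresh : ∀ b ∈ s, F.Adj x b → ∀ a' ∈ s, ∀ b' ∈ s, c s(w, g b) ≠ c s(g a', g b')) :
    IsRainbowOn F c (Function.update g x w) (insert x s) := by
  have hagree : Set.EqOn (Function.update g x w) g s := fun b hb =>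
    Function.update_of_ne (ne_of_mem_of_not_mem hb hx) w g
  have hagree_map : ∀ e ∈ s.sym2, e.map (Function.update g x w) = e.map g := fun e he =>
    Sym2.map_congr fun b hb => hagree (Set.mem_sym2_iff_subset.mp he hb)
  constructor
  · rw [Set.injOn_insert hx, hagree.image_eq, Function.update_self]
    exact ⟨hg.1.congr hagree.symm, hw_new⟩
  have hdisj : Disjoint ((fun b => s(x, b)) '' {b ∈ s | F.Adj x b}) (F.edgeSet ∩ s.sym2) := by
    rw [Set.disjoint_left]
    rintro _ ⟨b, -, rfl⟩ ⟨-, hxb⟩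
    exact hx (Set.mk_mem_sym2_iff.mp hxb).1
  rw [edgeSet_inter_sym2_insert, Set.injOn_union hdisj]
  refine ⟨?_, ?_, ?_⟩
  · refine Set.InjOn.image_of_comp fun b hb b' hb' hbb' => hg.1 hb.1 hb'.1 ?_
    simp only [Function.comp_apply, Sym2.map_mk, Function.update_self,
      hagree hb.1, hagree hb'.1] at hbb'
    rw [Sym2.eq_swap, Sym2.eq_swap (a := w)] at hbb'
    exact hc.eq_of_color_eq (hw_adj b hb.1 hb.2).symm (hw_adj b' hb'.1 hb'.2).symm hbb'
  · exact hg.2.congr fun e he => by simp only [hagree_map e he.2]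
  · rintro _ ⟨b, hb, rfl⟩ e ⟨-, he⟩
    induction e using Sym2.ind with
    | h a' b' =>
      rw [Set.mk_mem_sym2_iff] at he
      simp only [Sym2.map_mk, Function.update_self, hagree hb.1, hagree he.1, hagree he.2]
      exact hw_fresh b hb.1 hb.2 a' he.1 b' he.2

lemma exists_fresh_vertex (hc : IsProperEdgeColoring G c) (g : α → β) (s : Finset α) (x : α)
    {S : Finset β} (hS : ∀ u ∈ S, ∀ b ∈ s, F.Adj x b → G.Adj u (g b))
    (hcard : #s + #s ^ 3 < #S) :
    ∃ w ∈ S, w ∉ g '' s ∧ (∀ b ∈ s, F.Adj x b → G.Adj w (g b)) ∧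
      ∀ b ∈ s, F.Adj x b → ∀ a' ∈ s, ∀ b' ∈ s, c s(w, g b) ≠ c s(g a', g b') := by
  classical
  set T := {p ∈ s ×ˢ s ×ˢ s | F.Adj x p.1}
  set bad := s.image g ∪ T.biUnion fun p => {u ∈ S | c s(u, g p.1) = c s(g p.2.1, g p.2.2)}
  have hbad : #bad ≤ #s + #s ^ 3 := by
    refine (card_union_le _ _).trans (add_le_add card_image_le ?_)
    calc _ ≤ #T * 1 := card_biUnion_le_card_mul _ _ _ fun p hp =>
          hc.card_filter_color_eq_le_one (fun u hu =>
            hS u hu _ (mem_product.mp (mem_filter.mp hp).1).1 (mem_filter.mp hp).2) _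
      _ ≤ #(s ×ˢ s ×ˢ s) := by rw [mul_one]; exact card_filter_le _ _
      _ = #s ^ 3 := by rw [card_product, card_product]; ring
  obtain ⟨w, hwS, hwbad⟩ := exists_mem_notMem_of_card_lt_card (hbad.trans_lt hcard)
  simp only [bad, mem_union, mem_image, mem_biUnion, mem_filter, not_or, not_exists,
    not_and, T, mem_product] at hwbad
  refine ⟨w, hwS, ?_, hS w hwS, fun b hb hxb a' ha' b' hb' => ?_⟩
  · rintro ⟨a, ha, rfl⟩
    exact hwbad.1 a ha rfl
  · exact hwbad.2 ⟨b, a', b'⟩ ⟨⟨hb, ha', hb'⟩, hxb⟩ hwS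

theorem hasRainbowCopy_of_forall_lt_card [Fintype α] (hc : IsProperEdgeColoring G c)
    (C : α → Finset β)
    (hC : ∀ a b, F.Adj a b → ∀ u ∈ C a, ∀ v ∈ C b, G.Adj u v)
    (hcard : ∀ a, (Fintype.card α - 1) + (Fintype.card α - 1) ^ 3 < #(C a)) :
    HasRainbowCopy F G c := by
  classical
  have hpartial : ∀ s : Finset α, ∃ g : α → β, (∀ a, g a ∈ C a) ∧ IsRainbowOn F c g s := by
    intro s
    induction s using Finset.induction_on with
    | empty =>
      choose g hg using fun a => card_pos.mp (pos_of_gt (hcard a))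
      exact ⟨g, hg, by simp [IsRainbowOn]⟩
    | insert x s hx ih =>
      obtain ⟨g, hgC, hg⟩ := ih
      have hs : #s ≤ Fintype.card α - 1 := by
        have := card_le_univ (insert x s)
        rw [card_insert_of_notMem hx] at this
        omega
      obtain ⟨w, hwC, hw_new, hw_adj, hw_fresh⟩ := exists_fresh_vertex hc g s x
        (fun u hu b _ hxb => hC x b hxb u hu (g b) (hgC b))
        ((add_le_add hs (Nat.pow_le_pow_left hs 3)).trans_lt (hcard x))
      refine ⟨Function.update g x w, fun a => ?_, ?_⟩
      · rcases eq_or_ne a x with rfl | hax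
        · rwa [Function.update_self]
        · rw [Function.update_of_ne hax]
          exact hgC a
      · rw [coe_insert]
        exact hg.update hc (mod_cast hx) hw_new hw_adj hw_fresh
  obtain ⟨g, hgC, hg⟩ := hpartial univ
  rw [coe_univ, IsRainbowOn, Set.injOn_univ, Set.sym2_univ, Set.inter_univ] at hg
  exact ⟨⟨g, fun hab => hC _ _ hab _ (hgC _) _ (hgC _)⟩, hg.1,
    fun e₁ he₁ e₂ he₂ h => hg.2 he₁ he₂ h⟩

end RainbowEmbedding

theorem hasRainbowCopy_blowup {α ι : Type} [Fintype α] {F : SimpleGraph α} {H : SimpleGraph ι}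
    (φ : F →g H) {t : ι → ℕ} {c : Sym2 (Σ i, Fin (t i)) → ℕ}
    (hc : IsProperEdgeColoring (blowup H t) c)
    (ht : ∀ a, (Fintype.card α - 1) + (Fintype.card α - 1) ^ 3 < t (φ a)) :
    HasRainbowCopy F (blowup H t) c := by
  refine hasRainbowCopy_of_forall_lt_card hc
    (fun a => univ.map (Function.Embedding.sigmaMk (φ a))) ?_ (by simpa using ht)
  intro a b hab u hu v hv
  obtain ⟨i, -, rfl⟩ := mem_map.mp hu
  obtain ⟨j, -, rfl⟩ := mem_map.mp hv
  exact φ.map_rel hab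

theorem IsBalanced.le_card_mul_succ {ι : Type} [Fintype ι] {t : ι → ℕ} {n : ℕ}
    (h : IsBalanced t n) (v : ι) : n ≤ Fintype.card ι * (t v + 1) :=
  calc n = ∑ u, t u := h.2.2.symm
    _ ≤ ∑ _u : ι, (t v + 1) := sum_le_sum fun u _ => h.2.1 u v
    _ = Fintype.card ι * (t v + 1) := by rw [sum_const, card_univ, smul_eq_mul]

lemma pred_add_pred_pow_three_lt {m t : ℕ} (ht : 0 < t) (hmt : m ^ 3 ≤ t + 1) :
    (m - 1) + (m - 1) ^ 3 < t := by
  rcases Nat.lt_or_ge m 2 with hm | hm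
  · rwa [Nat.sub_eq_zero_of_le (Nat.le_of_lt_succ hm), zero_pow three_ne_zero]
  · obtain ⟨q, rfl⟩ : ∃ q, m = q + 2 := ⟨m - 2, by omega⟩
    rw [show q + 2 - 1 = q + 1 by omega]
    nlinarith

theorem stmt6_general (k m n : ℕ) (hn : (2 * k + 1) * m ^ 3 ≤ n)
    (tn : Fin (2 * k + 1) → ℕ) (htn : IsBalanced tn n)
    (tm : Fin (2 * k + 1) → ℕ) (htm : IsBalanced tm m)
    (c : Sym2 (Σ v : Fin (2 * k + 1), Fin (tn v)) → ℕ)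
    (hc : IsProperEdgeColoring (blowup (cycleGraph (2 * k + 1)) tn) c) :
    HasRainbowCopy (blowup (cycleGraph (2 * k + 1)) tm)
      (blowup (cycleGraph (2 * k + 1)) tn) c := by
  have hcard : Fintype.card (Σ v : Fin (2 * k + 1), Fin (tm v)) = m := by simp [htm.2.2]
  refine hasRainbowCopy_blowup ⟨Sigma.fst, fun h => h⟩ hc fun a => ?_
  change _ < tn a.1
  rw [hcard]
  refine pred_add_pred_pow_three_lt (htn.1 _)
    (Nat.le_of_mul_le_mul_left ?_ (Nat.succ_pos (2 * k)))
  simpa using hn.trans (htn.le_card_mul_succ a.1)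

/-- For `k, m ≥ 1` and `n ≥ (2k+1)·m³`, every proper edge coloring of any balanced
blowup `C_{2k+1}⟨n⟩` contains a rainbow copy of any balanced blowup `C_{2k+1}⟨m⟩`. -/
theorem stmt6 (k m n : ℕ) (hk : 1 ≤ k) (hm : 1 ≤ m) (hn : (2 * k + 1) * m ^ 3 ≤ n)
    (tn : Fin (2 * k + 1) → ℕ) (htn : IsBalanced tn n)
    (tm : Fin (2 * k + 1) → ℕ) (htm : IsBalanced tm m)
    (c : Sym2 (Σ v : Fin (2 * k + 1), Fin (tn v)) → ℕ)
    (hc : IsProperEdgeColoring (blowup (cycleGraph (2 * k + 1)) tn) c) :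
    HasRainbowCopy (blowup (cycleGraph (2 * k + 1)) tm)
      (blowup (cycleGraph (2 * k + 1)) tn) c :=
  stmt6_general k m n hn tn htn tm htm c hc
end

section
/- Let F be a bipartite graph with p(F) = s and let a, b be integers with a < s < b. Then ex(n, K_{a,b}, F) = (1+o(1))·N(K_{a,b}, K_{s-1, n-s+1}) as n → ∞. -/
open Filter SimpleGraph

open Finset Asymptotics

/-!
For `a ≠ b`, a copy of `K_{a,b}` in `G` is the same as a pair `(A, B)` of an `a`-set and a `b`-set
with `A` inside the common neighbourhood `N(B)`, so there are `∑_B C(|N(B)|, a)` of them. If `G`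
is `F`-free then every `s`-set `S` has `|N(S)| < |F| - s`, because `F` embeds into `K_{s,|F|-s}`.
A `b`-set `B` with `|N(B)| ≥ s` lies in `N(S)` for an `s`-set `S ⊆ N(B)`, so there are only
`O(n^s) = o(n^b)` of them, and every other `B` contributes at most `C(s-1, a)`. Hence
`ex(n, K_{a,b}, F) ≤ C(s-1,a) C(n,b) + O(n^s)`. On the other hand `K_{s-1,n-s+1}` is `F`-free,
as it has a colour class of size `s - 1 < p(F)`, and contains `C(s-1,a) C(n-s+1,b)` copies of
`K_{a,b}`. Both bounds are `(1 + o(1)) C(s-1,a) n^b / b!`.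
-/

lemma contains_iff_isContained {α β : Type} {F : SimpleGraph α} {G : SimpleGraph β} :
    Contains F G ↔ F ⊑ G :=
  ⟨fun ⟨f, hf⟩ => ⟨⟨f, hf⟩⟩, fun ⟨f⟩ => ⟨f.toHom, f.injective⟩⟩

lemma Set.ncard_range_eq_of_eq_iff {X Y Z : Type*} {f : X → Y} {g : X → Z}
    (h : ∀ x y, f x = f y ↔ g x = g y) : (Set.range f).ncard = (Set.range g).ncard := by
  have hker : Setoid.ker f = Setoid.ker g := Setoid.ext h
  rw [← Nat.card_coe_set_eq, ← Nat.card_coe_set_eq,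
    ← Nat.card_congr (Setoid.quotientKerEquivRange f), hker,
    Nat.card_congr (Setoid.quotientKerEquivRange g)]

lemma Finset.subset_of_same_biclique {V : Type*} [DecidableEq V] {A B A' B' : Finset V}
    (hAB : Disjoint A B) (hA'B' : Disjoint A' B') (hcard : #A ≠ #B') (hB : B ⊆ A' ∪ B')
    (hadj : ∀ u v, (u ∈ A ∧ v ∈ B ∨ u ∈ B ∧ v ∈ A) ↔ (u ∈ A' ∧ v ∈ B' ∨ u ∈ B' ∧ v ∈ A')) :
    B ⊆ B' := by
  intro v hv
  -- a vertex `v ∈ B ∩ A'` has neighbourhood `A` in one biclique and `B'` in the other, so `A = B'`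
  refine (mem_union.1 (hB hv)).resolve_left fun hvA' => hcard (congrArg card ?_)
  have hvA : v ∉ A := disjoint_right.1 hAB hv
  have hvB' : v ∉ B' := disjoint_left.1 hA'B' hvA'
  ext u
  simpa [hv, hvA, hvA', hvB'] using hadj u v

lemma SimpleGraph.Subgraph.map_injective_of_injective {V W : Type*} {G : SimpleGraph V}
    {G' : SimpleGraph W} {f : G →g G'} (hf : Function.Injective f) :
    Function.Injective (Subgraph.map f) := by
  intro S T h
  ext u
  · simpa [hf.mem_set_image] using congrArg (fun S => f u ∈ S.verts) h
  · rename_i v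
    simpa [Relation.Map, hf.eq_iff] using congrArg (fun S => S.Adj (f u) (f v)) h

lemma copyCount_le_of_copy {W V V' : Type} [Finite V'] {H : SimpleGraph W} {G : SimpleGraph V}
    {G' : SimpleGraph V'} (φ : Copy G G') :
    _root_.copyCount H G ≤ _root_.copyCount H G' :=
  Set.ncard_le_ncard_of_injOn (Subgraph.map φ.toHom)
    (fun S ⟨e⟩ => ⟨e.trans (φ.isoSubgraphMap S)⟩)
    (Subgraph.map_injective_of_injective φ.injective).injOn

/-- The generalized Turán number `ex(n, H, F)`. -/
noncomputable def generalizedExtremalNumber {α β : Type} (n : ℕ) (H : SimpleGraph β)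
    (F : SimpleGraph α) : ℕ :=
  sSup {N : ℕ | ∃ G : SimpleGraph (Fin n), ¬ Contains F G ∧ _root_.copyCount H G = N}

section GeneralizedExtremalNumber

variable {α β : Type} {F : SimpleGraph α} {H : SimpleGraph β}

lemma le_generalizedExtremalNumber {V : Type} [Fintype V] {G : SimpleGraph V}
    (hG : ¬ Contains F G) :
    _root_.copyCount H G ≤ generalizedExtremalNumber (Fintype.card V) H F := by
  let e := Iso.map (Fintype.equivFin V) G
  have hbdd : BddAbove {N : ℕ | ∃ G : SimpleGraph (Fin (Fintype.card V)), ¬ Contains F G ∧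
      _root_.copyCount H G = N} :=
    ((Set.finite_range fun G : SimpleGraph (Fin (Fintype.card V)) => _root_.copyCount H G).subset
      (by rintro _ ⟨G, -, rfl⟩; exact ⟨G, rfl⟩)).bddAbove
  refine (copyCount_le_of_copy e.toCopy).trans (le_csSup hbdd ⟨_, fun hF => hG ?_, rfl⟩)
  exact contains_iff_isContained.2 ((contains_iff_isContained.1 hF).trans ⟨e.symm.toCopy⟩)

lemma generalizedExtremalNumber_le {n m : ℕ}
    (h : ∀ G : SimpleGraph (Fin n), ¬ Contains F G → _root_.copyCount H G ≤ m) :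
    generalizedExtremalNumber n H F ≤ m :=
  csSup_le' <| by rintro _ ⟨G, hG, rfl⟩; exact h G hG

end GeneralizedExtremalNumber

namespace SimpleGraph

section CommonNeighborhood

variable {V : Type} [Fintype V] [DecidableEq V] (G : SimpleGraph V)

noncomputable def commonNbhd (B : Finset V) : Finset V := by
  classical exact univ.filter fun v => ∀ u ∈ B, G.Adj v u

noncomputable def completeBetweenPairs (p q : ℕ) : Finset (Finset V × Finset V) :=
  (univ.powersetCard p ×ˢ univ.powersetCard q).filter fun x => x.1 ⊆ G.commonNbhd x.2

variable {G}

lemma mem_commonNbhd {B : Finset V} {v : V} : v ∈ G.commonNbhd B ↔ ∀ u ∈ B, G.Adj v u := by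
  simp [commonNbhd]

lemma subset_commonNbhd_iff {A B : Finset V} :
    A ⊆ G.commonNbhd B ↔ G.IsCompleteBetween A B :=
  ⟨fun h _ hu _ hv => mem_commonNbhd.1 (h hu) _ hv,
    fun h _ hu => mem_commonNbhd.2 fun _ hv => h hu hv⟩

lemma subset_commonNbhd_comm {A B : Finset V} : A ⊆ G.commonNbhd B ↔ B ⊆ G.commonNbhd A := by
  rw [subset_commonNbhd_iff, subset_commonNbhd_iff, isCompleteBetween_comm]

lemma commonNbhd_anti {S B : Finset V} (h : S ⊆ B) : G.commonNbhd B ⊆ G.commonNbhd S :=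
  fun _ hv => mem_commonNbhd.2 fun u hu => mem_commonNbhd.1 hv u (h hu)

lemma mem_completeBetweenPairs {p q : ℕ} {x : Finset V × Finset V} :
    x ∈ G.completeBetweenPairs p q ↔ #x.1 = p ∧ #x.2 = q ∧ G.IsCompleteBetween x.1 x.2 := by
  simp [completeBetweenPairs, subset_commonNbhd_iff, and_assoc]

lemma card_completeBetweenPairs (p q : ℕ) :
    #(G.completeBetweenPairs p q) =
      ∑ B ∈ univ.powersetCard q, (#(G.commonNbhd B)).choose p := by
  rw [completeBetweenPairs, card_filter, sum_product_right]
  refine sum_congr rfl fun B _ => ?_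
  rw [← card_filter, ← card_powersetCard]
  congr 1
  ext A
  simp [mem_powersetCard, and_comm]

lemma card_powersetCard_filter_le_card_commonNbhd {q s c : ℕ}
    (h : ∀ S : Finset V, #S = s → #(G.commonNbhd S) ≤ c) :
    #((univ.powersetCard q).filter fun B => s ≤ #(G.commonNbhd B)) ≤
      (Fintype.card V).choose s * c.choose q := by
  have hcover : (univ.powersetCard q).filter (fun B => s ≤ #(G.commonNbhd B)) ⊆
      (univ.powersetCard s).biUnion fun S => (G.commonNbhd S).powersetCard q := by
    intro B hB
    rw [mem_filter, mem_powersetCard_univ] at hB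
    obtain ⟨S, hSB, hS⟩ := exists_subset_card_eq hB.2
    exact mem_biUnion.2 ⟨S, mem_powersetCard_univ.2 hS,
      mem_powersetCard.2 ⟨subset_commonNbhd_comm.1 hSB, hB.1⟩⟩
  calc _ ≤ _ := card_le_card hcover
    _ ≤ ∑ S ∈ univ.powersetCard s, #((G.commonNbhd S).powersetCard q) := card_biUnion_le
    _ ≤ ∑ S ∈ univ.powersetCard s, c.choose q := sum_le_sum fun S hS => by
      rw [card_powersetCard]
      exact Nat.choose_le_choose q (h S (mem_powersetCard_univ.1 hS))
    _ = (Fintype.card V).choose s * c.choose q := by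
      rw [sum_const, card_powersetCard, card_univ, smul_eq_mul]

lemma card_completeBetweenPairs_le {p q s c : ℕ} (hsq : s ≤ q)
    (h : ∀ S : Finset V, #S = s → #(G.commonNbhd S) ≤ c) :
    #(G.completeBetweenPairs p q) ≤
      (s - 1).choose p * (Fintype.card V).choose q +
        c.choose p * c.choose q * (Fintype.card V).choose s := by
  have hterm : ∀ B ∈ univ.powersetCard q, (#(G.commonNbhd B)).choose p ≤
      (s - 1).choose p + if s ≤ #(G.commonNbhd B) then c.choose p else 0 := by
    intro B hB
    split_ifs with hsB
    · obtain ⟨S, hSB, hS⟩ := exists_subset_card_eq ((mem_powersetCard_univ.1 hB).symm ▸ hsq)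
      exact le_add_left (Nat.choose_le_choose p
        ((card_le_card (commonNbhd_anti hSB)).trans (h S hS)))
    · exact Nat.choose_le_choose p (by omega)
  rw [card_completeBetweenPairs]
  calc _ ≤ _ := sum_le_sum hterm
    _ = (s - 1).choose p * (Fintype.card V).choose q +
        c.choose p * #((univ.powersetCard q).filter fun B => s ≤ #(G.commonNbhd B)) := by
      rw [sum_add_distrib, sum_const, sum_ite, sum_const, sum_const_zero, card_powersetCard,
        card_univ, smul_eq_mul, smul_eq_mul, add_zero, mul_comm, mul_comm (c.choose p)]
    _ ≤ _ := by
      rw [mul_assoc, mul_comm (c.choose q)]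
      gcongr
      exact card_powersetCard_filter_le_card_commonNbhd h

lemma choose_mul_choose_le_card_completeBetweenPairs {L R : Finset V}
    (h : G.IsCompleteBetween L R) (p q : ℕ) :
    (#L).choose p * (#R).choose q ≤ #(G.completeBetweenPairs p q) := by
  rw [← card_powersetCard, ← card_powersetCard, ← card_product]
  refine card_le_card fun x hx => ?_
  rw [mem_product, mem_powersetCard, mem_powersetCard] at hx
  exact mem_completeBetweenPairs.2 ⟨hx.1.2, hx.2.2, fun _ hu _ hv => h (hx.1.1 hu) (hx.2.1 hv)⟩

end CommonNeighborhood

namespace Copy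

variable {V : Type} [DecidableEq V] {G : SimpleGraph V} {ι κ : Type} [Fintype ι] [Fintype κ]
  (f : Copy (_root_.completeBipartiteGraph ι κ) G)

def parts : Finset V × Finset V :=
  (univ.image (f ∘ Sum.inl), univ.image (f ∘ Sum.inr))

lemma card_parts_fst : #f.parts.1 = Fintype.card ι :=
  card_image_of_injective _ (f.injective.comp Sum.inl_injective)

lemma card_parts_snd : #f.parts.2 = Fintype.card κ :=
  card_image_of_injective _ (f.injective.comp Sum.inr_injective)

lemma disjoint_parts : Disjoint f.parts.1 f.parts.2 := by
  rw [Finset.disjoint_left]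
  simp only [parts, mem_image, mem_univ, true_and, Function.comp_apply, not_exists]
  rintro _ ⟨i, rfl⟩ j h
  exact Sum.inr_ne_inl (f.injective h)

lemma isCompleteBetween_parts : G.IsCompleteBetween f.parts.1 f.parts.2 := by
  simp only [parts, coe_image, coe_univ, Set.image_univ]
  rintro _ ⟨i, rfl⟩ _ ⟨j, rfl⟩
  exact f.toHom.map_adj (by simp)

lemma toSubgraph_verts : f.toSubgraph.verts = ↑(f.parts.1 ∪ f.parts.2) := by
  ext v
  simp [parts]

lemma toSubgraph_adj {u v : V} :
    f.toSubgraph.Adj u v ↔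
      u ∈ f.parts.1 ∧ v ∈ f.parts.2 ∨ u ∈ f.parts.2 ∧ v ∈ f.parts.1 := by
  simp [parts, Relation.Map, completeBipartiteGraph_adj]

lemma toSubgraph_eq_toSubgraph_iff (h : Fintype.card ι ≠ Fintype.card κ)
    (g : Copy (_root_.completeBipartiteGraph ι κ) G) :
    f.toSubgraph = g.toSubgraph ↔ f.parts = g.parts := by
  constructor
  · intro hfg
    have hverts : f.parts.1 ∪ f.parts.2 = g.parts.1 ∪ g.parts.2 := by
      exact_mod_cast f.toSubgraph_verts.symm.trans (hfg ▸ g.toSubgraph_verts)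
    have hadj : ∀ u v, (u ∈ f.parts.1 ∧ v ∈ f.parts.2 ∨ u ∈ f.parts.2 ∧ v ∈ f.parts.1) ↔
        (u ∈ g.parts.1 ∧ v ∈ g.parts.2 ∨ u ∈ g.parts.2 ∧ v ∈ g.parts.1) := fun u v => by
      rw [← toSubgraph_adj, ← toSubgraph_adj, hfg]
    have hsnd : f.parts.2 = g.parts.2 := by
      refine Subset.antisymm ?_ ?_
      · refine subset_of_same_biclique f.disjoint_parts g.disjoint_parts ?_
          (hverts ▸ subset_union_right) hadj
        rwa [card_parts_fst, card_parts_snd]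
      · refine subset_of_same_biclique g.disjoint_parts f.disjoint_parts ?_
          (hverts ▸ subset_union_right) fun u v => (hadj u v).symm
        rwa [card_parts_fst, card_parts_snd]
    refine Prod.ext ?_ hsnd
    rw [← union_sdiff_cancel_right f.disjoint_parts, ← union_sdiff_cancel_right g.disjoint_parts,
      hverts, hsnd]
  · intro hfg
    ext u
    · rw [toSubgraph_verts, toSubgraph_verts, hfg]
    · rename_i v
      rw [toSubgraph_adj, toSubgraph_adj, hfg]

variable [Fintype V]

lemma range_parts :
    Set.range (parts (G := G) (ι := ι) (κ := κ)) =
      ↑(G.completeBetweenPairs (Fintype.card ι) (Fintype.card κ)) := by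
  ext x
  rw [Set.mem_range, mem_coe]
  constructor
  · rintro ⟨f, rfl⟩
    exact mem_completeBetweenPairs.2
      ⟨f.card_parts_fst, f.card_parts_snd, f.isCompleteBetween_parts⟩
  · intro hx
    obtain ⟨hA, hB, hAB⟩ := mem_completeBetweenPairs.1 hx
    let f := Copy.completeBipartiteGraph x.1 x.2 hA hB hAB
    -- `f` sends `ι` into `x.1` and `κ` into `x.2` by construction
    refine ⟨f, Prod.ext (eq_of_subset_of_card_le ?_ (by rw [hA, card_parts_fst]))
      (eq_of_subset_of_card_le ?_ (by rw [hB, card_parts_snd]))⟩ <;>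
    · simp only [parts, image_subset_iff, mem_univ, Function.comp_apply, forall_const]
      exact fun _ => Subtype.prop _

end Copy

end SimpleGraph

lemma copyCount_completeBipartiteGraph {V : Type} [Fintype V] [DecidableEq V]
    (G : SimpleGraph V) {ι κ : Type} [Fintype ι] [Fintype κ]
    (h : Fintype.card ι ≠ Fintype.card κ) :
    _root_.copyCount (completeBipartiteGraph ι κ) G =
      #(G.completeBetweenPairs (Fintype.card ι) (Fintype.card κ)) := by
  rw [_root_.copyCount, ← Copy.range_toSubgraph,
    Set.ncard_range_eq_of_eq_iff (Copy.toSubgraph_eq_toSubgraph_iff · h ·), Copy.range_parts,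
    Set.ncard_coe_finset]

section Coloring

variable {α V : Type} [Fintype α] {F : SimpleGraph α} {s : ℕ}

lemma card_filter_true_add_card_filter_false (χ : α → Bool) :
    #(univ.filter fun x => χ x = true) + #(univ.filter fun x => χ x = false) =
      Fintype.card α := by
  simpa using card_filter_add_card_filter_not (s := univ) (fun x => χ x = true)

lemma contains_of_isCompleteBetween [DecidableEq V] {G : SimpleGraph V} (χ : α → Bool)
    (hχ : ∀ u v, F.Adj u v → χ u ≠ χ v) {S T : Finset V} (hST : G.IsCompleteBetween S T)
    (hS : #(univ.filter fun x => χ x = true) ≤ #S)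
    (hT : #(univ.filter fun x => χ x = false) ≤ #T) : Contains F G := by
  let K := completeBipartiteGraph {x // χ x = true} {x // ¬ χ x = true}
  have hFK : F ⊑ K := by
    refine ⟨⟨(Equiv.sumCompl _).symm, fun {u v} huv => ?_⟩, (Equiv.sumCompl _).symm.injective⟩
    have := hχ u v huv
    cases hu : χ u <;> cases hv : χ v <;> simp_all [K, Equiv.sumCompl_symm_apply_of_pos,
      Equiv.sumCompl_symm_apply_of_neg]
  have hKG : K ⊑ G := by
    rw [completeBipartiteGraph_isContained_iff]
    obtain ⟨S', hS'S, hS'⟩ := exists_subset_card_eq (s := S)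
      (n := Fintype.card {x // χ x = true}) (by rwa [Fintype.card_subtype])
    obtain ⟨T', hT'T, hT'⟩ := exists_subset_card_eq (s := T)
      (n := Fintype.card {x // ¬ χ x = true}) (by simpa [Fintype.card_subtype] using hT)
    exact ⟨S', T', hS', hT', fun _ hu _ hv => hST (hS'S hu) (hT'T hv)⟩
  exact contains_iff_isContained.2 (hFK.trans hKG)

lemma card_commonNbhd_add_lt [Fintype V] [DecidableEq V] {G : SimpleGraph V}
    (hs : s ∈ smallerClassSizes F) (hF : ¬ Contains F G) {S : Finset V} (hS : #S = s) :
    #(G.commonNbhd S) + s < Fintype.card α := by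
  obtain ⟨χ, hχ, rfl⟩ := hs
  have hsum := card_filter_true_add_card_filter_false χ
  by_contra! hle
  have hS_cn : G.IsCompleteBetween S (G.commonNbhd S) :=
    subset_commonNbhd_iff.1 (subset_commonNbhd_comm.1 subset_rfl)
  rcases min_choice (#(univ.filter fun x => χ x = true)) (#(univ.filter fun x => χ x = false))
    with hmin | hmin <;> rw [hmin] at hS hle
  · exact hF (contains_of_isCompleteBetween χ hχ hS_cn hS.ge (by omega))
  · exact hF (contains_of_isCompleteBetween χ hχ hS_cn.symm (by omega) hS.ge)

lemma not_contains_of_coloring (hs : s ∈ lowerBounds (smallerClassSizes F)) [Fintype V]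
    {G : SimpleGraph V} (π : V → Bool) (hπ : ∀ u v, G.Adj u v → π u ≠ π v)
    (hsmall : #(univ.filter fun v => π v = true) < s) : ¬ Contains F G := by
  rintro ⟨f, hf⟩
  have hmem : min #(univ.filter fun x => π (f x) = true) #(univ.filter fun x => π (f x) = false)
      ∈ smallerClassSizes F :=
    ⟨π ∘ f, fun u v huv => hπ _ _ (f.map_rel huv), rfl⟩
  have hpull : #(univ.filter fun x => π (f x) = true) ≤ #(univ.filter fun v => π v = true) :=
    card_le_card_of_injOn f (fun x hx => by simpa using hx) hf.injOn
  have := min_le_left #(univ.filter fun x => π (f x) = true)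
    #(univ.filter fun x => π (f x) = false)
  have := hs hmem
  omega

lemma not_contains_completeBipartiteGraph (hs : s ∈ lowerBounds (smallerClassSizes F))
    {γ δ : Type} [Fintype γ] [Fintype δ] (h : Fintype.card γ < s) :
    ¬ Contains F (completeBipartiteGraph γ δ) := by
  refine not_contains_of_coloring hs Sum.isLeft ?_ ?_
  · rintro (u | u) (v | v) huv <;> simp_all
  · have : (univ.filter fun v : γ ⊕ δ => v.isLeft = true) = univ.map Function.Embedding.inl := by
      ext (v | v) <;> simp
    rwa [this, card_map, card_univ]

end Coloring

section Bounds

variable {α : Type} [Fintype α] {F : SimpleGraph α} {s : ℕ} {ι κ : Type} [Fintype ι] [Fintype κ]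

lemma copyCount_completeBipartiteGraph_le_of_not_contains (hs : s ∈ smallerClassSizes F)
    (hικ : Fintype.card ι ≠ Fintype.card κ) (hsκ : s ≤ Fintype.card κ) {V : Type} [Fintype V]
    [DecidableEq V] {G : SimpleGraph V} (hF : ¬ Contains F G) :
    _root_.copyCount (completeBipartiteGraph ι κ) G ≤
      (s - 1).choose (Fintype.card ι) * (Fintype.card V).choose (Fintype.card κ) +
        (Fintype.card α - s - 1).choose (Fintype.card ι) *
          (Fintype.card α - s - 1).choose (Fintype.card κ) * (Fintype.card V).choose s := by
  rw [copyCount_completeBipartiteGraph G hικ]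
  exact card_completeBetweenPairs_le hsκ fun S hS => by
    have := card_commonNbhd_add_lt hs hF hS
    omega

lemma choose_mul_choose_le_copyCount_completeBipartiteGraph {γ δ : Type} [Fintype γ] [Fintype δ]
    (hικ : Fintype.card ι ≠ Fintype.card κ) :
    (Fintype.card γ).choose (Fintype.card ι) * (Fintype.card δ).choose (Fintype.card κ) ≤
      _root_.copyCount (completeBipartiteGraph ι κ) (completeBipartiteGraph γ δ) := by
  classical
  rw [copyCount_completeBipartiteGraph _ hικ]
  simpa using choose_mul_choose_le_card_completeBetweenPairs (L := univ.map .inl)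
    (R := univ.map .inr) (by simp [IsCompleteBetween]) (Fintype.card ι) (Fintype.card κ)

end Bounds

lemma isLittleO_sub_of_le_of_le {ι : Type*} {l : Filter ι} {lo y x hi : ι → ℝ}
    (hlo : ∀ᶠ i in l, 0 ≤ lo i) (hly : ∀ᶠ i in l, lo i ≤ y i) (hyx : ∀ᶠ i in l, y i ≤ x i)
    (hxh : ∀ᶠ i in l, x i ≤ hi i) (h : (fun i => hi i - lo i) =o[l] lo) :
    (fun i => x i - y i) =o[l] y := by
  have hgap : (fun i => x i - y i) =O[l] (fun i => hi i - lo i) :=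
    IsBigO.of_bound' <| by
      filter_upwards [hly, hyx, hxh] with i h₁ h₂ h₃
      rw [Real.norm_of_nonneg (by linarith), Real.norm_of_nonneg (by linarith)]
      linarith
  have hlo_y : lo =O[l] y :=
    IsBigO.of_bound' <| by
      filter_upwards [hlo, hly] with i h₀ h₁
      rw [Real.norm_of_nonneg h₀, Real.norm_of_nonneg (h₀.trans h₁)]
      exact h₁
  exact hgap.trans_isLittleO (h.trans_isBigO hlo_y)

lemma isLittleO_choose_of_lt {j k : ℕ} (hjk : j < k) :
    (fun n : ℕ => (n.choose j : ℝ)) =o[atTop] (fun n : ℕ => (n.choose k : ℝ)) :=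
  (isTheta_choose j).isBigO.trans_isLittleO <|
    ((isLittleO_pow_pow_atTop_of_lt hjk).comp_tendsto tendsto_natCast_atTop_atTop).trans_isBigO
      (isTheta_choose k).symm.isBigO

lemma isEquivalent_choose_sub (m k : ℕ) :
    (fun n : ℕ => ((n - m).choose k : ℝ)) ~[atTop] (fun n : ℕ => (n.choose k : ℝ)) := by
  have hsub : (fun n : ℕ => ((n - m : ℕ) : ℝ)) ~[atTop] (fun n : ℕ => (n : ℝ)) := by
    refine ((isLittleO_const_id_atTop (-(m : ℝ))).comp_tendsto
      tendsto_natCast_atTop_atTop).congr' ?_ EventuallyEq.rfl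
    filter_upwards [eventually_ge_atTop m] with n hn
    simp [Nat.cast_sub hn]
  exact ((isEquivalent_choose k).comp_tendsto (tendsto_sub_atTop_nat m)).trans <|
    ((hsub.pow k).div IsEquivalent.refl).trans (isEquivalent_choose k).symm

lemma isLittleO_choose_add_choose_sub {j k : ℕ} (hjk : j < k) (m : ℕ) {c : ℝ} (hc : c ≠ 0)
    (K : ℝ) :
    (fun n : ℕ => (c * n.choose k + K * n.choose j) - c * (n - m).choose k)
      =o[atTop] (fun n : ℕ => c * ((n - m).choose k : ℝ)) := by
  rw [isLittleO_const_mul_right_iff hc]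
  have hk := (isEquivalent_choose_sub m k).symm
  have hmain : (fun n : ℕ => c * ((n.choose k : ℝ) - (n - m).choose k))
      =o[atTop] (fun n : ℕ => ((n - m).choose k : ℝ)) :=
    hk.isLittleO.const_mul_left c
  have hrest : (fun n : ℕ => K * (n.choose j : ℝ))
      =o[atTop] (fun n : ℕ => ((n - m).choose k : ℝ)) :=
    ((isLittleO_choose_of_lt hjk).trans_isBigO hk.isBigO).const_mul_left K
  exact (hmain.add hrest).congr_left fun n => by ring

/-- If `F` is bipartite with `p(F) = s` and `a < s < b`, then
`ex(n, K_{a,b}, F) = (1+o(1))·N(K_{a,b}, K_{s-1,n-s+1})` as `n → ∞`. -/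
theorem stmt10 {α : Type} [Fintype α] (F : SimpleGraph α) (s : ℕ)
    (hs : IsLeast (smallerClassSizes F) s) (a b : ℕ) (has : a < s) (hsb : s < b) :
    (fun n : ℕ =>
      ((sSup {N : ℕ | ∃ G : SimpleGraph (Fin n), ¬ Contains F G ∧
          _root_.copyCount (completeBipartiteGraph (Fin a) (Fin b)) G = N} : ℕ) : ℝ) -
        ((_root_.copyCount (completeBipartiteGraph (Fin a) (Fin b))
          (completeBipartiteGraph (Fin (s - 1)) (Fin (n - s + 1))) : ℕ) : ℝ))
      =o[atTop] (fun n : ℕ =>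
        ((_root_.copyCount (completeBipartiteGraph (Fin a) (Fin b))
          (completeBipartiteGraph (Fin (s - 1)) (Fin (n - s + 1))) : ℕ) : ℝ)) := by
  set c := Fintype.card α - s - 1
  have hab : Fintype.card (Fin a) ≠ Fintype.card (Fin b) := by simp; omega
  have hc : ((s - 1).choose a : ℝ) ≠ 0 := by exact_mod_cast (Nat.choose_pos (by omega)).ne'
  refine isLittleO_sub_of_le_of_le
    (x := fun n => (generalizedExtremalNumber n (completeBipartiteGraph (Fin a) (Fin b)) F : ℝ))
    (lo := fun n => ((s - 1).choose a : ℝ) * ((n - (s - 1)).choose b : ℝ))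
    (hi := fun n => ((s - 1).choose a : ℝ) * n.choose b +
      (c.choose a * c.choose b : ℝ) * n.choose s)
    (.of_forall fun n => by positivity) ?_ ?_ ?_ (isLittleO_choose_add_choose_sub hsb (s - 1) hc _)
  · filter_upwards [eventually_ge_atTop s] with n hn
    have := choose_mul_choose_le_copyCount_completeBipartiteGraph (γ := Fin (s - 1))
      (δ := Fin (n - s + 1)) hab
    simp only [Fintype.card_fin] at this
    rw [show n - (s - 1) = n - s + 1 by omega]
    exact_mod_cast this
  · filter_upwards [eventually_ge_atTop s] with n hn
    have := le_generalizedExtremalNumber (H := completeBipartiteGraph (Fin a) (Fin b))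
      (not_contains_completeBipartiteGraph hs.2 (γ := Fin (s - 1)) (δ := Fin (n - s + 1))
        (by simp; omega))
    rw [Fintype.card_sum, Fintype.card_fin, Fintype.card_fin,
      show s - 1 + (n - s + 1) = n by omega] at this
    exact_mod_cast this
  · refine .of_forall fun n => ?_
    have := generalizedExtremalNumber_le (n := n) fun G hG =>
      copyCount_completeBipartiteGraph_le_of_not_contains hs.1 hab (by simp; omega) (G := G) hG
    simp only [Fintype.card_fin] at this
    exact_mod_cast this
end
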